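/- arXiv:2407.03680 — 4 statements merged into one kernel-verified Lean document; each statement's English description precedes it below -/
import Mathlib

section
/- Let $K$ be a $d$-simplex with vertices $V_0,\dots,V_d$ and barycentric coordinates $\lambda_0,\dots,\lambda_d$ (affine functions on $\mathbb{R}^d$ with $\lambda_i(V_j)=\delta_{ij}$ and $\sum_i \lambda_i = 1$). If $u = \sum_{|\alpha|=k} c_\alpha \prod_{i=0}^d \lambda_i^{\alpha_i}$ is a polynomial of degree $k$ and all derivatives $\nabla^n u|_{V_0} = 0$ for $0 \le n \le r$, then $c_\alpha = 0$ for every multi-index $\alpha$ with $\alpha_0 \ge k - r$. -/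
/-!
Pull everything back along the affine chart `x ↦ V₀ + ∑ₜ xₜ (Vₜ₊₁ - V₀)`, which sends the origin
to `V₀`. Being affine, the barycentric coordinates become `λ₀ = 1 - ∑ₜ xₜ` and `λₜ₊₁ = xₜ`, so `u`
becomes `∑ c_α (1 - ∑ₜ xₜ)^α₀ x^α'` with `α' = (α₁, …, α_d)`; by the chain rule its derivatives of
order `≤ r` still vanish at the origin, i.e. its Taylor coefficients of degree `≤ r` vanish. As
`(1 - ∑ₜ xₜ)^α₀` has constant term `1`, the coefficient of `x^γ` is `c_α` (for the unique `α` with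
`α' = γ`) plus multiples of `c_β` with `β' < γ`, so induction on `γ` kills every `c_α` with
`|α'| = k - α₀ ≤ r`.
-/

open MvPolynomial

/-- Iterated partial derivatives along a list of coordinate directions. -/
noncomputable def pderivs {d : ℕ} (l : List (Fin d)) (u : MvPolynomial (Fin d) ℝ) :
    MvPolynomial (Fin d) ℝ :=
  l.foldr (fun i p => MvPolynomial.pderiv i p) u

theorem pderiv_aeval {R σ τ : Type*} [CommSemiring R] [Fintype σ] (g : σ → MvPolynomial τ R)
    (m : τ) (p : MvPolynomial σ R) :
    pderiv m (aeval g p) = ∑ j, pderiv m (g j) * aeval g (pderiv j p) := by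
  classical
  induction p using MvPolynomial.induction_on with
  | C a => simp
  | add p q hp hq => simp only [map_add, hp, hq, mul_add, Finset.sum_add_distrib]
  | mul_X p s hp =>
    simp only [map_mul, aeval_X, Derivation.leibniz, pderiv_X, hp, smul_eq_mul, map_add,
      mul_add, Finset.sum_add_distrib, Finset.mul_sum]
    simp [Pi.single_apply, mul_comm, mul_assoc]

theorem eval_aeval {R σ τ : Type*} [CommSemiring R] (y : τ → R) (g : σ → MvPolynomial τ R)
    (p : MvPolynomial σ R) : eval y (aeval g p) = eval (fun j => eval y (g j)) p := by
  rw [aeval_eq_bind₁]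
  exact eval₂Hom_bind₁ _ _ _ _

theorem eq_C_add_sum_of_totalDegree_le_one {R σ : Type*} [CommSemiring R] [Fintype σ]
    {p : MvPolynomial σ R} (hp : p.totalDegree ≤ 1) :
    p = C (coeff 0 p) + ∑ j, C (coeff (Finsupp.single j 1) p) * X j := by
  classical
  ext m
  simp only [coeff_add, coeff_C, coeff_sum, coeff_C_mul, coeff_X, mul_ite, mul_one, mul_zero]
  obtain hm | hm | hm : m.degree = 0 ∨ m.degree = 1 ∨ 1 < m.degree := by omega
  · obtain rfl := (Finsupp.degree_eq_zero_iff m).1 hm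
    simp
  · obtain ⟨a, rfl⟩ := (Finsupp.sum_eq_one_iff m).1 hm
    simp [Finsupp.single_left_inj, eq_comm (a := (0 : σ →₀ ℕ))]
  · have hm0 : m ≠ 0 := by rintro rfl; simp at hm
    have hm1 : ∀ j, Finsupp.single j 1 ≠ m := by rintro j rfl; simp at hm
    simp [coeff_eq_zero_of_totalDegree_lt (hp.trans_lt hm), Ne.symm hm0, hm1]

section SimplexChart
variable {R σ : Type*} [CommRing R] {n : ℕ} (V : Fin (n + 1) → σ → R)

noncomputable def simplexChart (j : σ) : MvPolynomial (Fin n) R :=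
  C (V 0 j) + ∑ t, C (V t.succ j - V 0 j) * X t

theorem pderiv_simplexChart (m : Fin n) (j : σ) :
    pderiv m (simplexChart V j) = C (V m.succ j - V 0 j) := by
  classical
  simp [simplexChart, pderiv_X, Pi.single_apply]

theorem eval_zero_simplexChart : (fun j => eval 0 (simplexChart V j)) = V 0 := by
  funext j
  simp [simplexChart]

theorem aeval_simplexChart [Fintype σ] {p : MvPolynomial σ R} (hp : p.totalDegree ≤ 1) :
    aeval (simplexChart V) p =
      C (eval (V 0) p) + ∑ t, C (eval (V t.succ) p - eval (V 0) p) * X t := by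
  rw [eq_C_add_sum_of_totalDegree_le_one hp]
  simp only [simplexChart, map_add, map_sum, map_mul, aeval_C, aeval_X, eval_C, eval_X,
    algebraMap_eq, mul_add, Finset.sum_add_distrib, add_assoc, add_sub_add_left_eq_sub,
    Finset.mul_sum, ← Finset.sum_sub_distrib, ← mul_sub, Finset.sum_mul, mul_assoc]
  rw [Finset.sum_comm]

end SimplexChart

section Barycentric
variable {R σ : Type*} [CommRing R] [Fintype σ] {n : ℕ} {V : Fin (n + 1) → σ → R}
  {lam : Fin (n + 1) → MvPolynomial σ R}

noncomputable def Fin.tailFinsupp (α : Fin (n + 1) → ℕ) : Fin n →₀ ℕ :=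
  Finsupp.equivFunOnFinite.symm (Fin.tail α)

theorem Fin.degree_tailFinsupp_add (α : Fin (n + 1) → ℕ) :
    (Fin.tailFinsupp α).degree + α 0 = ∑ i, α i := by
  rw [Fin.sum_univ_succ, Finsupp.degree_eq_sum, add_comm]
  rfl

theorem Fin.injOn_tailFinsupp (k : ℕ) :
    Set.InjOn (Fin.tailFinsupp (n := n)) {α | ∑ i, α i = k} := by
  intro β hβ γ hγ h
  have h0 : β 0 = γ 0 := by
    have hβ' := Fin.degree_tailFinsupp_add β
    have hγ' := Fin.degree_tailFinsupp_add γ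
    rw [(hβ : ∑ i, β i = k), h] at hβ'
    rw [(hγ : ∑ i, γ i = k)] at hγ'
    omega
  rw [← Fin.cons_self_tail β, ← Fin.cons_self_tail γ, h0,
    Finsupp.equivFunOnFinite.symm.injective h]

theorem aeval_simplexChart_prod_pow (hdeg : ∀ i, (lam i).totalDegree ≤ 1)
    (hval : ∀ i j, eval (V j) (lam i) = if i = j then 1 else 0) (α : Fin (n + 1) → ℕ) :
    aeval (simplexChart V) (∏ i, lam i ^ α i) =
      (1 - ∑ t, X t) ^ α 0 * monomial (Fin.tailFinsupp α) 1 := by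
  have hlam_zero : aeval (simplexChart V) (lam 0) = 1 - ∑ t, X t := by
    rw [aeval_simplexChart V (hdeg 0)]
    simp [hval, fun t : Fin n => (Fin.succ_ne_zero t).symm, sub_eq_add_neg]
  have hlam_succ (i : Fin n) : aeval (simplexChart V) (lam i.succ) = X i := by
    rw [aeval_simplexChart V (hdeg _)]
    simp [hval]
  rw [map_prod, Fin.prod_univ_succ, map_pow, hlam_zero, monomial_eq, C_1, one_mul,
    Finsupp.prod_fintype _ _ fun _ => pow_zero _]
  simp only [map_pow, hlam_succ]
  rfl

end Barycentric

section Pderivs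
variable {d : ℕ}

theorem pderivs_nil (p : MvPolynomial (Fin d) ℝ) : pderivs [] p = p := rfl

theorem pderivs_cons (i : Fin d) (l : List (Fin d)) (p : MvPolynomial (Fin d) ℝ) :
    pderivs (i :: l) p = pderiv i (pderivs l p) := rfl

theorem pderivs_append (l₁ l₂ : List (Fin d)) (p : MvPolynomial (Fin d) ℝ) :
    pderivs (l₁ ++ l₂) p = pderivs l₁ (pderivs l₂ p) :=
  List.foldr_append

theorem pderivs_sum_C_mul {ι : Type*} (l : List (Fin d)) (s : Finset ι) (a : ι → ℝ)
    (q : ι → MvPolynomial (Fin d) ℝ) :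
    pderivs l (∑ i ∈ s, C (a i) * q i) = ∑ i ∈ s, C (a i) * pderivs l (q i) := by
  induction l with
  | nil => rfl
  | cons j l ih => simp only [pderivs_cons, ih, map_sum, pderiv_C_mul]

theorem coeff_pderivs_eq_zero_iff (l : List (Fin d)) (δ : Fin d →₀ ℕ)
    (p : MvPolynomial (Fin d) ℝ) :
    coeff δ (pderivs l p) = 0 ↔ coeff (δ + Multiset.toFinsupp (l : Multiset (Fin d))) p = 0 := by
  induction l generalizing δ with
  | nil => simp [pderivs_nil]
  | cons i l ih =>
    rw [pderivs_cons, coeff_pderiv, mul_eq_zero, or_iff_left (by positivity), ih, add_assoc,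
      ← Multiset.cons_coe, ← Multiset.singleton_add, Multiset.toFinsupp_add,
      Multiset.toFinsupp_singleton]

def VanishesToOrder (r : ℕ) (p : MvPolynomial (Fin d) ℝ) (a : Fin d → ℝ) : Prop :=
  ∀ l : List (Fin d), l.length ≤ r → eval a (pderivs l p) = 0

theorem VanishesToOrder.coeff_eq_zero {r : ℕ} {p : MvPolynomial (Fin d) ℝ}
    (hp : VanishesToOrder r p 0) {γ : Fin d →₀ ℕ} (hγ : γ.degree ≤ r) : coeff γ p = 0 := by
  have hl : Multiset.toFinsupp (γ.toMultiset.toList : Multiset (Fin d)) = γ := by simp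
  have hlen : γ.toMultiset.toList.length ≤ r := by
    rw [Multiset.length_toList, Finsupp.card_toMultiset]
    exact hγ
  have := hp γ.toMultiset.toList hlen
  rwa [eval_zero, constantCoeff_eq, coeff_pderivs_eq_zero_iff, zero_add, hl] at this

/- Peeling off the innermost derivative, `l = t ++ [m]`, lets the chain rule act on `p` itself,
and the induction hypothesis is then applied to each `pderiv j p`. -/
theorem VanishesToOrder.aeval_of_pderiv_eq_C {r : ℕ} {p : MvPolynomial (Fin d) ℝ}
    {g : Fin d → MvPolynomial (Fin d) ℝ} {W : Fin d → Fin d → ℝ}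
    (hg : ∀ m j, pderiv m (g j) = C (W m j)) {y : Fin d → ℝ}
    (hp : VanishesToOrder r p fun j => eval y (g j)) : VanishesToOrder r (aeval g p) y := by
  intro l hl
  induction l using List.reverseRecOn generalizing p r with
  | nil => rw [pderivs_nil, eval_aeval]; exact hp [] (Nat.zero_le r)
  | append_singleton t m ih =>
    rw [pderivs_append, pderivs_cons, pderivs_nil, pderiv_aeval]
    simp only [hg, pderivs_sum_C_mul, map_sum, eval_mul, eval_C]
    refine Finset.sum_eq_zero fun j _ => ?_
    rw [ih (r := t.length) (fun l' hl' => ?_) le_rfl, mul_zero]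
    have := hp (l' ++ [j]) (by simp only [List.length_append, List.length_singleton] at hl ⊢; omega)
    rwa [pderivs_append, pderivs_cons, pderivs_nil] at this

end Pderivs

theorem eq_zero_of_coeff_sum_smul_mul_monomial_eq_zero {R σ ι : Type*} [CommSemiring R]
    {S : Finset ι} {c : ι → R} {f : ι → MvPolynomial σ R} {e : ι → σ →₀ ℕ}
    (hf : ∀ β ∈ S, constantCoeff (f β) = 1) (he : Set.InjOn e S) {D : Set (σ →₀ ℕ)}
    (hD : IsLowerSet D) (hcoeff : ∀ γ ∈ D, coeff γ (∑ β ∈ S, c β • (f β * monomial (e β) 1)) = 0) :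
    ∀ α ∈ S, e α ∈ D → c α = 0 := by
  suffices ∀ γ, ∀ α ∈ S, e α = γ → γ ∈ D → c α = 0 from fun α hα => this _ α hα rfl
  intro γ
  induction γ using WellFoundedLT.induction with
  | _ γ ih =>
  rintro α hα rfl hαD
  have hα' := hcoeff _ hαD
  rw [coeff_sum, Finset.sum_eq_single_of_mem α hα] at hα'
  · simpa [coeff_mul_monomial', ← constantCoeff_eq, hf α hα] using hα'
  · intro β hβ hne
    rw [coeff_smul, coeff_mul_monomial']
    split_ifs with hle
    · have hlt : e β < e α := lt_of_le_of_ne hle fun heq => hne (he hβ hα heq)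
      rw [ih _ hlt β hβ rfl (hD hle hαD), zero_smul]
    · rw [smul_zero]

theorem stmt0_general (d k r : ℕ)
    (V : Fin (d + 1) → (Fin d → ℝ))
    (lam : Fin (d + 1) → MvPolynomial (Fin d) ℝ)
    (hdeg : ∀ i, (lam i).totalDegree ≤ 1)
    (hval : ∀ i j, MvPolynomial.eval (V j) (lam i) = if i = j then 1 else 0)
    (S : Finset (Fin (d + 1) → ℕ)) (hS : ∀ α ∈ S, ∑ i, α i = k)
    (c : (Fin (d + 1) → ℕ) → ℝ)
    (u : MvPolynomial (Fin d) ℝ)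
    (hu : u = ∑ α ∈ S, c α • ∏ i, lam i ^ α i)
    (hvanish : ∀ l : List (Fin d), l.length ≤ r →
      MvPolynomial.eval (V 0) (pderivs l u) = 0) :
    ∀ α ∈ S, k - r ≤ α 0 → c α = 0 := by
  intro α hα hαr
  have hpullback : aeval (simplexChart V) u =
      ∑ β ∈ S, c β • ((1 - ∑ t, X t) ^ β 0 * monomial (Fin.tailFinsupp β) 1) := by
    simp only [hu, map_sum, map_smul, aeval_simplexChart_prod_pow hdeg hval]
  have hcoeff : ∀ γ ∈ {γ : Fin d →₀ ℕ | γ.degree ≤ r},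
      coeff γ (aeval (simplexChart V) u) = 0 := fun γ hγ =>
    VanishesToOrder.coeff_eq_zero
      (VanishesToOrder.aeval_of_pderiv_eq_C (pderiv_simplexChart V)
        (by rwa [eval_zero_simplexChart])) hγ
  refine eq_zero_of_coeff_sum_smul_mul_monomial_eq_zero (fun β _ => by simp)
    ((Fin.injOn_tailFinsupp k).mono hS) (fun _ _ h hb => (Finsupp.degree_mono h).trans hb)
    (hpullback ▸ hcoeff) α hα ?_
  have htail := Fin.degree_tailFinsupp_add α
  rw [hS α hα] at htail
  show (Fin.tailFinsupp α).degree ≤ r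
  omega

/-- if all derivatives of `u` of order `≤ r` vanish at the vertex `V 0`,
then every coefficient `c α` with `α 0 ≥ k - r` in the barycentric representation
`u = ∑ c α • ∏ λᵢ^{αᵢ}` vanishes. -/
theorem stmt0 (d k r : ℕ) (hrk : r ≤ k)
    (V : Fin (d + 1) → (Fin d → ℝ)) (hV : AffineIndependent ℝ V)
    (lam : Fin (d + 1) → MvPolynomial (Fin d) ℝ)
    (hdeg : ∀ i, (lam i).totalDegree ≤ 1)
    (hval : ∀ i j, MvPolynomial.eval (V j) (lam i) = if i = j then 1 else 0)
    (hsum : ∑ i, lam i = 1)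
    (S : Finset (Fin (d + 1) → ℕ)) (hS : ∀ α ∈ S, ∑ i, α i = k)
    (c : (Fin (d + 1) → ℕ) → ℝ)
    (u : MvPolynomial (Fin d) ℝ)
    (hu : u = ∑ α ∈ S, c α • ∏ i, lam i ^ α i)
    (hvanish : ∀ l : List (Fin d), l.length ≤ r →
      MvPolynomial.eval (V 0) (pderivs l u) = 0) :
    ∀ α ∈ S, k - r ≤ α 0 → c α = 0 :=
  stmt0_general d k r V lam hdeg hval S hS c u hu hvanish
end

section
/- Let $\gamma, \overline{\alpha} \in \mathbb{N}_0^d$ be multi-indices and $\alpha_0 \in \mathbb{N}_0$. Define $\Lambda^{\overline{\alpha}} = \prod_{i=1}^d \lambda_i^{\alpha_i}/\alpha_i!$ and $\Lambda_0^{\alpha_0} = \lambda_0^{\alpha_0}/\alpha_0!$, where $\lambda_0,\dots,\lambda_d$ are barycentric coordinates of a $d$-simplex, and let $\overline{D}^\gamma$ denote the mixed directional derivative of order $\gamma$ along the edge vectors $\bm{t}_i = V_i - V_0$. Then $\overline{D}^\gamma(\Lambda^{\overline{\alpha}} \Lambda_0^{\alpha_0}) = \sum_{\gamma' \le \gamma}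 (-1)^{|\gamma| - |\gamma'|} \binom{\gamma}{\gamma'} \Lambda^{\overline{\alpha} - \gamma'} \Lambda_0^{\alpha_0 - |\gamma| + |\gamma'|}$, with the convention that a term is zero whenever any exponent would be negative. -/
open MvPolynomial

/-- Directional derivative of a polynomial along the vector `v`. -/
noncomputable def dirDeriv {d : ℕ} (v : Fin d → ℝ) :
    Module.End ℝ (MvPolynomial (Fin d) ℝ) :=
  ∑ j, v j • (MvPolynomial.pderiv j).toLinearMap

/-- Mixed directional derivative `D̄^γ = ∏ᵢ (∂/∂tᵢ)^{γᵢ}`. -/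
noncomputable def Dbar {d : ℕ} (t : Fin d → (Fin d → ℝ)) (γ : Fin d → ℕ) :
    Module.End ℝ (MvPolynomial (Fin d) ℝ) :=
  ((List.finRange d).map fun i => (dirDeriv (t i)) ^ (γ i)).prod

/-- Normalized barycentric monomial `Λ^ᾱ = ∏ᵢ λᵢ^{αᵢ}/αᵢ!`, with integer exponents,
equal to `0` by convention if some exponent is negative. -/
noncomputable def LamI {d : ℕ} (lam : Fin d → MvPolynomial (Fin d) ℝ) (a : Fin d → ℤ) :
    MvPolynomial (Fin d) ℝ :=
  if ∀ i, 0 ≤ a i then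
    (((∏ i, ((a i).toNat).factorial : ℕ) : ℝ))⁻¹ • ∏ i, lam i ^ (a i).toNat
  else 0

/-- `Λ₀^{α₀} = λ₀^{α₀}/α₀!`, with integer exponent, `0` by convention if negative. -/
noncomputable def Lam0I {d : ℕ} (lam0 : MvPolynomial (Fin d) ℝ) (a : ℤ) :
    MvPolynomial (Fin d) ℝ :=
  if 0 ≤ a then ((a.toNat.factorial : ℕ) : ℝ)⁻¹ • lam0 ^ a.toNat else 0

/-!
Write `F (a, b) = Λ^a Λ₀^b` for integer exponents `(a, b) ∈ ℤᵈ × ℤ`. Because the powers are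
divided by factorials, a derivation acts on them as an index shift, and the convention `Λ = 0`
for negative exponents makes this exact at the boundary:
`∂/∂tⱼ F (a, b) = F (a - eⱼ, b) - F (a, b - 1)`.
Extending `F` linearly to the group algebra `ℝ[ℤᵈ × ℤ]`, the operator `∂/∂tⱼ` becomes
multiplication by `Xⱼ - Y`, with `Xⱼ` and `Y` the unit shifts. This algebra is commutative, so
`D̄^γ` becomes multiplication by `∏ⱼ (Xⱼ - Y)^{γⱼ}`, and the binomial theorem in each factor gives
the formula.
-/

open Finset Nat AddMonoidAlgebra

section ShiftOperators

variable {R M G : Type*} [CommRing R] [AddCommGroup M] [Module R M] [AddCommMonoid G]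

variable (R) in
noncomputable def linearExtension (F : G → M) : R[G] →ₗ[R] M :=
  (AddMonoidAlgebra.basis G R).constr R F

lemma linearExtension_single (F : G → M) (g : G) (r : R) :
    linearExtension R F (single g r) = r • F g := by
  have h : single g r = r • AddMonoidAlgebra.basis G R g := by simp
  rw [h, map_smul, linearExtension, Module.Basis.constr_basis]

lemma apply_linearExtension_of_shift (D : Module.End R M) (F : G → M) (s c : G)
    (hD : ∀ g, D (F g) = F (g + s) - F (g + c)) (x : R[G]) :
    D (linearExtension R F x) = linearExtension R F ((single s 1 - single c 1) * x) := by
  have h : D ∘ₗ linearExtension R F =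
      linearExtension R F ∘ₗ LinearMap.mulLeft R (single s 1 - single c 1) :=
    (AddMonoidAlgebra.basis G R).ext fun g => by
      simp [sub_mul, single_mul_single, hD, add_comm, linearExtension_single]
  exact LinearMap.congr_fun h x

lemma single_sub_single_pow (s c : G) (n : ℕ) :
    (single s 1 - single c 1 : R[G]) ^ n =
      ∑ k ∈ range (n + 1), single (k • s + (n - k) • c) ((-1 : R) ^ (n - k) * n.choose k) := by
  rw [sub_eq_add_neg, ← single_neg, add_pow]
  refine sum_congr rfl fun k _ => ?_
  rw [single_pow, single_pow, natCast_def, single_mul_single, single_mul_single, one_pow,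
    one_mul, add_zero]

lemma pow_apply_linearExtension_of_shift (D : Module.End R M) (F : G → M) (s c : G)
    (hD : ∀ g, D (F g) = F (g + s) - F (g + c)) (n : ℕ) (x : R[G]) :
    (D ^ n) (linearExtension R F x) =
      linearExtension R F ((single s 1 - single c 1) ^ n * x) := by
  induction n generalizing x with
  | zero => simp
  | succ n ih =>
    rw [pow_succ, Module.End.mul_apply, apply_linearExtension_of_shift D F s c hD, ih, pow_succ,
      mul_assoc]

lemma list_prod_apply_linearExtension_of_shift {ι : Type*} (D : ι → Module.End R M) (F : G → M)
    (s : ι → G) (c : G) (hD : ∀ i g, D i (F g) = F (g + s i) - F (g + c)) (γ : ι → ℕ)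
    (L : List ι) (x : R[G]) :
    (L.map fun i => D i ^ γ i).prod (linearExtension R F x) =
      linearExtension R F ((L.map fun i => (single (s i) 1 - single c 1) ^ γ i).prod * x) := by
  induction L with
  | nil => simp
  | cons i L ih =>
    rw [List.map_cons, List.prod_cons, Module.End.mul_apply, ih,
      pow_apply_linearExtension_of_shift (D i) F (s i) c (hD i), List.map_cons, List.prod_cons,
      mul_assoc]

lemma le_of_mem_piFinset_range {ι : Type*} [Fintype ι] [DecidableEq ι] {γ γ' : ι → ℕ}
    (h : γ' ∈ Fintype.piFinset fun i => range (γ i + 1)) (i : ι) : γ' i ≤ γ i :=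
  Nat.lt_succ_iff.mp (mem_range.mp (Fintype.mem_piFinset.mp h i))

theorem list_prod_pow_apply_of_shift {d : ℕ} (D : Fin d → Module.End R M) (F : G → M)
    (s : Fin d → G) (c : G) (hD : ∀ i g, D i (F g) = F (g + s i) - F (g + c))
    (γ : Fin d → ℕ) (g : G) :
    ((List.finRange d).map fun i => D i ^ γ i).prod (F g) =
      ∑ γ' ∈ Fintype.piFinset (fun i => range (γ i + 1)),
        ((-1 : R) ^ (∑ i, γ i - ∑ i, γ' i) * ∏ i, ((γ i).choose (γ' i) : R)) •
          F (g + ∑ i, γ' i • s i + (∑ i, γ i - ∑ i, γ' i) • c) := by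
  have hg : F g = linearExtension R F (single g 1) := by rw [linearExtension_single, one_smul]
  rw [hg, list_prod_apply_linearExtension_of_shift D F s c hD, ← Fin.prod_univ_def]
  simp_rw [single_sub_single_pow]
  rw [prod_univ_sum, sum_mul, map_sum]
  refine sum_congr rfl fun γ' hγ' => ?_
  have hsub : ∑ i, (γ i - γ' i) = ∑ i, γ i - ∑ i, γ' i :=
    sum_tsub_distrib _ fun i _ => le_of_mem_piFinset_range hγ' i
  rw [prod_single, single_mul_single, linearExtension_single, prod_mul_distrib,
    prod_pow_eq_pow_sum, hsub, sum_add_distrib, ← sum_smul, hsub, add_comm, ← add_assoc, mul_one]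

end ShiftOperators

section DividedPowers

variable {d : ℕ}

lemma Lam0I_natCast (x : MvPolynomial (Fin d) ℝ) (n : ℕ) :
    Lam0I x n = ((n ! : ℕ) : ℝ)⁻¹ • x ^ n := by
  simp [Lam0I]

lemma Lam0I_of_neg (x : MvPolynomial (Fin d) ℝ) {b : ℤ} (hb : b < 0) : Lam0I x b = 0 :=
  if_neg hb.not_ge

lemma Derivation.map_Lam0I (D : Derivation ℝ (MvPolynomial (Fin d) ℝ) (MvPolynomial (Fin d) ℝ))
    (x : MvPolynomial (Fin d) ℝ) (b : ℤ) : D (Lam0I x b) = Lam0I x (b - 1) * D x := by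
  rcases lt_or_ge b 0 with hb | hb
  · rw [Lam0I_of_neg x hb, Lam0I_of_neg x (by omega), map_zero, zero_mul]
  lift b to ℕ using hb
  cases b with
  | zero =>
    rw [Lam0I_of_neg x (show ((0 : ℕ) : ℤ) - 1 < 0 by norm_num), zero_mul, Lam0I_natCast]
    simp
  | succ n =>
    rw [Lam0I_natCast, show ((n + 1 : ℕ) : ℤ) - 1 = n by push_cast; ring, Lam0I_natCast,
      map_smul, D.leibniz_pow, ← Nat.cast_smul_eq_nsmul ℝ, smul_smul, smul_mul_assoc,
      add_tsub_cancel_right, smul_eq_mul, factorial_succ]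
    congr 1
    push_cast
    field_simp

lemma LamI_eq_prod_Lam0I (lam : Fin d → MvPolynomial (Fin d) ℝ) (a : Fin d → ℤ) :
    LamI lam a = ∏ i, Lam0I (lam i) (a i) := by
  by_cases ha : ∀ i, 0 ≤ a i
  · simp only [LamI, if_pos ha, Lam0I, if_pos (ha _), prod_smul]
    push_cast
    rw [prod_inv_distrib]
  · obtain ⟨i, hi⟩ := not_forall.mp ha
    rw [LamI, if_neg ha, prod_eq_zero (mem_univ i) (Lam0I_of_neg _ (not_le.mp hi))]

lemma Derivation.map_LamI (D : Derivation ℝ (MvPolynomial (Fin d) ℝ) (MvPolynomial (Fin d) ℝ))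
    (lam : Fin d → MvPolynomial (Fin d) ℝ) (j : Fin d) (hj : D (lam j) = 1)
    (hi : ∀ i ≠ j, D (lam i) = 0) (a : Fin d → ℤ) :
    D (LamI lam a) = LamI lam (a - Pi.single j 1) := by
  have hrest : D (∏ i ∈ univ.erase j, Lam0I (lam i) (a i)) = 0 :=
    prod_induction _ (fun p => D p = 0)
      (fun p q hp hq => by rw [D.leibniz, hp, hq, smul_zero, smul_zero, add_zero])
      D.map_one_eq_zero
      fun i hij => by rw [D.map_Lam0I, hi i (ne_of_mem_erase hij), mul_zero]
  have hshift : ∏ i ∈ univ.erase j, Lam0I (lam i) ((a - Pi.single j 1 : Fin d → ℤ) i) =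
      ∏ i ∈ univ.erase j, Lam0I (lam i) (a i) :=
    prod_congr rfl fun i hij => by simp [ne_of_mem_erase hij]
  rw [LamI_eq_prod_Lam0I, LamI_eq_prod_Lam0I, ← mul_prod_erase univ _ (mem_univ j),
    ← mul_prod_erase univ _ (mem_univ j), hshift, D.leibniz, hrest, D.map_Lam0I, hj]
  simp [mul_comm]

lemma Derivation.map_LamI_mul_Lam0I
    (D : Derivation ℝ (MvPolynomial (Fin d) ℝ) (MvPolynomial (Fin d) ℝ))
    (lam : Fin d → MvPolynomial (Fin d) ℝ) (lam0 : MvPolynomial (Fin d) ℝ) (j : Fin d)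
    (hj : D (lam j) = 1) (hi : ∀ i ≠ j, D (lam i) = 0) (h0 : D lam0 = -1)
    (a : Fin d → ℤ) (b : ℤ) :
    D (LamI lam a * Lam0I lam0 b) =
      LamI lam (a - Pi.single j 1) * Lam0I lam0 b - LamI lam a * Lam0I lam0 (b - 1) := by
  rw [D.leibniz, D.map_LamI lam j hj hi, D.map_Lam0I, h0, smul_eq_mul, smul_eq_mul]
  ring

end DividedPowers

noncomputable def dirDerivation {d : ℕ} (v : Fin d → ℝ) :
    Derivation ℝ (MvPolynomial (Fin d) ℝ) (MvPolynomial (Fin d) ℝ) :=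
  ∑ j, v j • MvPolynomial.pderiv j

lemma dirDeriv_apply {d : ℕ} (v : Fin d → ℝ) (p : MvPolynomial (Fin d) ℝ) :
    dirDeriv v p = dirDerivation v p := by
  rw [dirDerivation, ← Derivation.coeFnAddMonoidHom_apply, map_sum, Finset.sum_apply]
  simp [dirDeriv]

/-- Leibniz-type expansion of `D̄^γ (Λ^ᾱ Λ₀^{α₀})`. -/
theorem stmt3 (d : ℕ)
    (t : Fin d → (Fin d → ℝ))
    (lam : Fin d → MvPolynomial (Fin d) ℝ) (lam0 : MvPolynomial (Fin d) ℝ)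
    (hlam : ∀ i j, dirDeriv (t j) (lam i) = MvPolynomial.C (if i = j then (1 : ℝ) else 0))
    (hlam0 : ∀ j, dirDeriv (t j) lam0 = MvPolynomial.C (-1 : ℝ))
    (γ abar : Fin d → ℕ) (a0 : ℕ) :
    Dbar t γ (LamI lam (fun i => (abar i : ℤ)) * Lam0I lam0 (a0 : ℤ)) =
      ∑ γ' ∈ Fintype.piFinset (fun i => Finset.range (γ i + 1)),
        (((-1 : ℝ) ^ (∑ i, γ i - ∑ i, γ' i)) * ∏ i, ((γ i).choose (γ' i) : ℝ)) •
          (LamI lam (fun i => (abar i : ℤ) - (γ' i : ℤ)) *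
            Lam0I lam0 ((a0 : ℤ) - (∑ i, γ i : ℕ) + (∑ i, γ' i : ℕ))) := by
  let F : (Fin d → ℤ) × ℤ → MvPolynomial (Fin d) ℝ := fun g => LamI lam g.1 * Lam0I lam0 g.2
  have hshift : ∀ j g, dirDeriv (t j) (F g) = F (g + (-Pi.single j 1, 0)) - F (g + (0, -1)) := by
    rintro j ⟨a, b⟩
    have hj : dirDerivation (t j) (lam j) = 1 := by rw [← dirDeriv_apply, hlam, if_pos rfl, map_one]
    have hi : ∀ i ≠ j, dirDerivation (t j) (lam i) = 0 := fun i h => by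
      rw [← dirDeriv_apply, hlam, if_neg h, map_zero]
    have h0 : dirDerivation (t j) lam0 = -1 := by rw [← dirDeriv_apply, hlam0, map_neg, map_one]
    rw [dirDeriv_apply, (dirDerivation (t j)).map_LamI_mul_Lam0I lam lam0 j hj hi h0]
    simp [F, sub_eq_add_neg]
  have hF : LamI lam (fun i => (abar i : ℤ)) * Lam0I lam0 (a0 : ℤ) = F (fun i => abar i, a0) := rfl
  rw [Dbar, hF, list_prod_pow_apply_of_shift _ F _ _ hshift γ]
  refine sum_congr rfl fun γ' hγ' => ?_
  have hle : ∑ i, γ' i ≤ ∑ i, γ i := sum_le_sum fun i _ => le_of_mem_piFinset_range hγ' i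
  congr 1
  show F (_ + _ + _) = F (_, _)
  congr 1
  refine Prod.ext (funext fun k => ?_) ?_
  · simp [Prod.fst_sum, Finset.sum_apply, Pi.single_apply, sub_eq_add_neg]
  · simp [Prod.snd_sum, Nat.cast_sub hle]
    ring
end

section
/- Let $d \ge 2$, let $2 \le s \le d$, and let $0 \le r_1 \le \cdots \le r_d$ be integers with $r_t \ge 2r_{t-1}$ for all $t = s+1, \dots, d$ and $r_s \le 2r_{s-1} - 1$. Set $\overline{r} = r_s - r_{s-1} + 1$ and define $v(x) = x_{s-1}^{r_{s-1}} x_s^{\overline{r}} \prod_{i=s+1}^d x_i^{r_i - r_{i-1}} \cdot (1 - \sum_{i=s+1}^d x_i)^{r_d - r_s}$. Then for every subset $E$ of the face $F = \{x : x_1 = \cdots = x_s = 0, \sum_{i > s} x_i \le 1, x_i \ge 0\}$ that is the convex hull of $V_0 = 0$ together with unit vectors $e_{i}$ for $i$ in some subset $I \subseteq \{s+1,\dots,d\}$ with $|I| = d - t$, all partial derivatives of $v$ of order at most $r_t$ vanish identically on $E$. -/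
/-!
Fix a point `x` of the face and let `J` be the kernel of evaluation at `x`. Every coordinate `x_i`
with `i ∉ I` vanishes on the face, so `X_i ∈ J`. The monomial factor of `v` contains these
variables with total degree at least `r_t + 1`: `x_{s-1}` and `x_s` contribute `r_s + 1`, and the
`t - s` indices in `{s+1, …, d} \ I` contribute at least `r_t - r_s`, because `r_i ≥ 2 r_{i-1}`
makes the increments `r_i - r_{i-1}` nondecreasing. Hence `v ∈ J ^ (r_t + 1)`, and since a
derivation maps `J ^ (n + 1)` into `J ^ n`, every derivative of order `≤ r_t` lies in `J`.
-/

open MvPolynomial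

/-- The polynomial
`v = x_{s-1}^{r_{s-1}} x_s^{r̄} ∏_{i=s+1}^d x_i^{r_i - r_{i-1}} (1 - ∑_{i>s} x_i)^{r_d - r_s}`
(variables indexed by 1-based positions). -/
noncomputable def vPoly (d s : ℕ) (r : ℕ → ℕ) : MvPolynomial (Fin d) ℝ :=
  (∏ j : Fin d, MvPolynomial.X j ^
      (if (j : ℕ) + 1 = s - 1 then r (s - 1)
       else if (j : ℕ) + 1 = s then r s - r (s - 1) + 1
       else if s ≤ (j : ℕ) then r ((j : ℕ) + 1) - r (j : ℕ) else 0)) *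
    (1 - ∑ j ∈ Finset.univ.filter (fun j : Fin d => s ≤ (j : ℕ)), MvPolynomial.X j)
      ^ (r d - r s)

open Finset

theorem Derivation.map_mem_pow_of_mem_pow_succ {R A : Type*} [CommSemiring R] [CommSemiring A]
    [Algebra R A] (D : Derivation R A A) (J : Ideal A) :
    ∀ {n : ℕ} {u : A}, u ∈ J ^ (n + 1) → D u ∈ J ^ n
  | 0, _, _ => by simp [Ideal.one_eq_top]
  | n + 1, _, hu => by
    rw [pow_succ] at hu
    refine Submodule.mul_induction_on hu (fun a ha b hb => ?_) (fun p q hp hq => ?_)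
    · rw [D.leibniz, smul_eq_mul, smul_eq_mul, pow_succ]
      exact add_mem (Ideal.mul_mem_right _ _ ha)
        (Ideal.mul_mem_mul_rev (D.map_mem_pow_of_mem_pow_succ J ha) hb)
    · rw [map_add]
      exact add_mem hp hq

theorem pderivs_mem_pow {d : ℕ} (J : Ideal (MvPolynomial (Fin d) ℝ)) :
    ∀ (l : List (Fin d)) {n : ℕ} {u : MvPolynomial (Fin d) ℝ},
      u ∈ J ^ (n + l.length) → pderivs l u ∈ J ^ n
  | [], _, _, hu => hu
  | i :: l, _, _, hu =>
    (pderiv i).map_mem_pow_of_mem_pow_succ J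
      (pderivs_mem_pow J l (by rwa [List.length_cons, ← add_assoc, add_right_comm] at hu))

theorem eval_pderivs_eq_zero_of_mem_pow {d : ℕ} {x : Fin d → ℝ} {u : MvPolynomial (Fin d) ℝ}
    {l : List (Fin d)} (hu : u ∈ RingHom.ker (eval x) ^ (l.length + 1)) :
    eval x (pderivs l u) = 0 := by
  rw [add_comm] at hu
  simpa using pderivs_mem_pow _ l hu

theorem LinearMap.map_eq_zero_of_mem_convexHull {𝕜 E F : Type*} [Field 𝕜] [LinearOrder 𝕜]
    [IsStrictOrderedRing 𝕜] [AddCommGroup E] [Module 𝕜 E] [AddCommGroup F] [Module 𝕜 F]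
    (f : E →ₗ[𝕜] F) {s : Set E} (hs : ∀ y ∈ s, f y = 0) {x : E} (hx : x ∈ convexHull 𝕜 s) :
    f x = 0 :=
  convexHull_min (fun y hy => LinearMap.mem_ker.2 (hs y hy)) (LinearMap.ker f).convex hx

theorem Ideal.prod_pow_mem_pow_sum {ι A : Type*} [CommSemiring A] {J : Ideal A} {s : Finset ι}
    {a : ι → A} (k : ι → ℕ) (ha : ∀ i ∈ s, a i ∈ J) :
    ∏ i ∈ s, a i ^ k i ∈ J ^ ∑ i ∈ s, k i := by
  rw [← prod_pow_eq_pow_sum]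
  exact Ideal.prod_mem_prod fun i hi => Ideal.pow_mem_pow (ha i hi) _

theorem Finset.sum_filter_fin_succ {M : Type*} [AddCommMonoid M] (d : ℕ) (p : ℕ → Prop)
    [DecidablePred p] (f : ℕ → M) :
    ∑ j ∈ univ.filter (fun j : Fin d => p (j + 1)), f (j + 1) = ∑ i ∈ (Icc 1 d).filter p, f i := by
  rw [sum_filter, sum_filter,
    Fin.sum_univ_eq_sum_range (fun i => if p (i + 1) then f (i + 1) else 0), range_eq_Ico,
    sum_Ico_add' (fun i => if p i then f i else 0), zero_add,
    Ico_add_one_right_eq_Icc]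

section Exponents

variable {s d : ℕ} {r : ℕ → ℕ}

theorem monotoneOn_sub_pred (hgrow : ∀ t', s + 1 ≤ t' → t' ≤ d → 2 * r (t' - 1) ≤ r t') :
    MonotoneOn (fun i => r i - r (i - 1)) (Set.Icc (s + 1) d) := by
  refine monotoneOn_of_le_add_one Set.ordConnected_Icc fun a _ _ ha1 => ?_
  have := hgrow (a + 1) ha1.1 ha1.2
  simp only [Nat.add_sub_cancel] at this ⊢
  omega

theorem le_add_sum_sub_pred (hgrow : ∀ t', s + 1 ≤ t' → t' ≤ d → 2 * r (t' - 1) ≤ r t')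
    {C : Finset ℕ} (hC : C ⊆ Icc (s + 1) d) :
    r (s + #C) ≤ r s + ∑ i ∈ C, (r i - r (i - 1)) := by
  induction C using Finset.induction_on_max with
  | empty => simp
  | insert a C hlt ih =>
    have hCsub : C ⊆ Icc (s + 1) d := (subset_insert a C).trans hC
    have ha := mem_Icc.1 (hC (mem_insert_self a C))
    have hcard : #C ≤ a - (s + 1) := by
      simpa using card_le_card fun i hi => mem_Ico.2 ⟨(mem_Icc.1 (hCsub hi)).1, hlt i hi⟩
    have hstep := monotoneOn_sub_pred hgrow (a := s + #C + 1) (b := a)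
      ⟨by omega, by omega⟩ ha (by omega)
    have := ih hCsub
    rw [card_insert_of_notMem fun h => (hlt a h).false, sum_insert fun h => (hlt a h).false,
      ← add_assoc]
    simp only [Nat.add_sub_cancel] at hstep
    omega

/-- The exponent of `x_i` in the monomial factor of `vPoly`, for the 1-based position `i`. -/
def vExp (s : ℕ) (r : ℕ → ℕ) (i : ℕ) : ℕ :=
  if i = s - 1 then r (s - 1) else if i = s then r s - r (s - 1) + 1
  else if s + 1 ≤ i then r i - r (i - 1) else 0

theorem lt_sum_vExp (hs : 2 ≤ s) (hgrow : ∀ t', s + 1 ≤ t' → t' ≤ d → 2 * r (t' - 1) ≤ r t')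
    {t : ℕ} {I : Finset ℕ} (hI : I ⊆ Icc (s + 1) d) (hcard : #I = d - t) (hts : s ≤ t)
    (htd : t ≤ d) :
    r t < ∑ i ∈ (Icc 1 d).filter (· ∉ I), vExp s r i := by
  set C := Icc (s + 1) d \ I
  have hC : #C = t - s := by
    rw [card_sdiff_of_subset hI, Nat.card_Icc, hcard]
    omega
  have hkey := le_add_sum_sub_pred (C := C) hgrow sdiff_subset
  rw [hC, Nat.add_sub_cancel' hts] at hkey
  have hsumC : ∑ i ∈ C, vExp s r i = ∑ i ∈ C, (r i - r (i - 1)) :=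
    sum_congr rfl fun i hi => by
      have := (mem_Icc.1 (mem_sdiff.1 hi).1).1
      rw [vExp, if_neg (by omega), if_neg (by omega), if_pos this]
  have hsC : s ∉ C := fun h => by have := (mem_Icc.1 (mem_sdiff.1 h).1).1; omega
  have hs1C : s - 1 ∉ insert s C := by
    rw [mem_insert]
    rintro (h | h)
    · omega
    · have := (mem_Icc.1 (mem_sdiff.1 h).1).1; omega
  have hsub : insert (s - 1) (insert s C) ⊆ (Icc 1 d).filter (· ∉ I) := by
    intro i hi
    simp only [mem_insert, mem_filter, mem_Icc] at hi ⊢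
    rcases hi with rfl | rfl | hi
    · exact ⟨by omega, fun h => by have := mem_Icc.1 (hI h); omega⟩
    · exact ⟨by omega, fun h => by have := mem_Icc.1 (hI h); omega⟩
    · obtain ⟨hiIcc, hiI⟩ := mem_sdiff.1 hi
      obtain ⟨hsi, hid⟩ := mem_Icc.1 hiIcc
      exact ⟨⟨by omega, hid⟩, hiI⟩
  calc r t < r (s - 1) + (r s - r (s - 1) + 1) + ∑ i ∈ C, (r i - r (i - 1)) := by omega
    _ = ∑ i ∈ insert (s - 1) (insert s C), vExp s r i := by
      rw [sum_insert hs1C, sum_insert hsC, hsumC, vExp, vExp, if_pos rfl, if_neg (by omega),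
        if_pos rfl, add_assoc]
    _ ≤ _ := sum_le_sum_of_subset hsub

end Exponents

theorem prod_X_pow_vExp_dvd_vPoly (d s : ℕ) (r : ℕ → ℕ) :
    ∏ j : Fin d, X j ^ vExp s r (j + 1) ∣ vPoly d s r := by
  refine Dvd.intro _ (congrArg (· * _) (prod_congr rfl fun j _ => congrArg _ ?_))
  simp only [vExp, Nat.add_sub_cancel, add_le_add_iff_right]

theorem vPoly_mem_pow {d s t : ℕ} {r : ℕ → ℕ} (hs : 2 ≤ s)
    (hgrow : ∀ t', s + 1 ≤ t' → t' ≤ d → 2 * r (t' - 1) ≤ r t')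
    {I : Finset ℕ} (hI : I ⊆ Icc (s + 1) d) (hcard : #I = d - t) (hts : s ≤ t) (htd : t ≤ d)
    {J : Ideal (MvPolynomial (Fin d) ℝ)} (hX : ∀ j : Fin d, (j : ℕ) + 1 ∉ I → X j ∈ J) :
    vPoly d s r ∈ J ^ (r t + 1) := by
  refine Ideal.mem_of_dvd _ (prod_X_pow_vExp_dvd_vPoly d s r) ?_
  rw [← prod_filter_mul_prod_filter_not univ fun j : Fin d => (j : ℕ) + 1 ∉ I]
  refine Ideal.mul_mem_right _ _ (Ideal.pow_le_pow_right ?_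
    (Ideal.prod_pow_mem_pow_sum _ fun j hj => hX j (mem_filter.1 hj).2))
  rw [sum_filter_fin_succ d (· ∉ I)]
  exact lt_sum_vExp hs hgrow hI hcard hts htd

theorem stmt11_general (d s t : ℕ) (r : ℕ → ℕ) (hs2 : 2 ≤ s)
    (hgrow : ∀ t', s + 1 ≤ t' → t' ≤ d → 2 * r (t' - 1) ≤ r t')
    (I : Finset ℕ) (hI : I ⊆ Finset.Icc (s + 1) d) (hcard : I.card = d - t)
    (hts : s ≤ t) (htd : t ≤ d) :
    ∀ x ∈ convexHull ℝ (insert (0 : Fin d → ℝ)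
        {y | ∃ i ∈ I, y = fun j : Fin d => if (j : ℕ) + 1 = i then (1 : ℝ) else 0}),
      ∀ l : List (Fin d), l.length ≤ r t →
        MvPolynomial.eval x (pderivs l (vPoly d s r)) = 0 := by
  intro x hx l hl
  have hX (j : Fin d) (hj : (j : ℕ) + 1 ∉ I) : X j ∈ RingHom.ker (eval x) := by
    rw [RingHom.mem_ker, eval_X]
    refine (LinearMap.proj (R := ℝ) j).map_eq_zero_of_mem_convexHull ?_ hx
    rintro y (rfl | ⟨i, hi, rfl⟩)
    · rfl
    · exact if_neg fun h : (j : ℕ) + 1 = i => hj (h ▸ hi)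
  exact eval_pderivs_eq_zero_of_mem_pow <|
    Ideal.pow_le_pow_right (by omega) (vPoly_mem_pow hs2 hgrow hI hcard hts htd hX)

/-- on every face `E = conv({0} ∪ {eᵢ : i ∈ I})`, `I ⊆ {s+1,…,d}`,
`|I| = d - t`, all partial derivatives of `v` of order at most `r t` vanish identically. -/
theorem stmt11 (d s t : ℕ) (r : ℕ → ℕ) (hd : 2 ≤ d) (hs2 : 2 ≤ s) (hsd : s ≤ d)
    (hmono : ∀ i, 1 ≤ i → i < d → r i ≤ r (i + 1))
    (hgrow : ∀ t', s + 1 ≤ t' → t' ≤ d → 2 * r (t' - 1) ≤ r t')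
    (hrs : r s + 1 ≤ 2 * r (s - 1))
    (I : Finset ℕ) (hI : I ⊆ Finset.Icc (s + 1) d) (hcard : I.card = d - t)
    (hts : s ≤ t) (htd : t ≤ d) :
    ∀ x ∈ convexHull ℝ (insert (0 : Fin d → ℝ)
        {y | ∃ i ∈ I, y = fun j : Fin d => if (j : ℕ) + 1 = i then (1 : ℝ) else 0}),
      ∀ l : List (Fin d), l.length ≤ r t →
        MvPolynomial.eval x (pderivs l (vPoly d s r)) = 0 :=
  stmt11_general d s t r hs2 hgrow I hI hcard hts htd
end

section
/- Let $d \ge 2$, $2 \le s \le d$, and integers $0 \le r_{s-1} \le r_s \le \cdots \le r_d$ with $r_s \le 2r_{s-1} - 1$; set $\overline{r} = r_s - r_{s-1} + 1 \le r_{s-1}$. There is no polynomial $u$ in $x_1,\dots,x_d$ such that: (i) $\frac{\partial^{\overline{r}} u}{\partial x_s^{\overline{r}}}$ vanishes identically on the set $F_1 = \{x : x_i = 0 \text{ for } i \ne s-1, s+1, \dots, d;\ x_s = 0;\ x_{s-1}, x_{s+1}, \dots, x_d > 0,\ \sum x_i < 1\}$, and (ii) $\frac{\partial^{r_{s-1}}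 u}{\partial x_{s-1}^{r_{s-1}}}$ agrees on $F_2 = \{x : x_i = 0 \text{ for } i < s-1;\ x_{s-1} = 0;\ x_s < 0;\ x_{s+1},\dots,x_d > 0\}$ with $r_{s-1}! \, x_s^{\overline{r}} \prod_{i=s+1}^d x_i^{r_i - r_{i-1}} (1 - \sum_{i=s+1}^d x_i)^{r_d - r_s}$. -/
/-!
The faces `F₁` and `F₂` are boxes with infinite sides in coordinate subspaces, so a polynomial
vanishing on one of them has no monomial in the coordinates of that subspace alone. Since
`k` derivatives in `x_i` turn the coefficient of `x_i^k m` (with `m` free of `x_i`) into `k!`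
times the coefficient of `m`, this reads off the coefficient of
`x_{s-1}^{r_{s-1}} x_s^{r̄} ∏_{i>s} x_i^{r_i - r_{i-1}}` in `u`: condition (i) makes it `0`, while
by condition (ii) it is the coefficient of `x_s^{r̄} ∏_{i>s} x_i^{r_i - r_{i-1}}` in the prescribed
polynomial divided by `r_{s-1}!`, which is `1` because `(1 - ∑ x_i)^{r_d - r_s}` has constant
term `1`.
-/

open MvPolynomial

namespace MvPolynomial

variable {R σ ι : Type*}

section CommSemiring

variable [CommSemiring R]

theorem coeff_iterate_pderiv (i : σ) (k : ℕ) (p : MvPolynomial σ R) (m : σ →₀ ℕ) :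
    coeff m ((pderiv i)^[k] p) =
      (m i + k).descFactorial k * coeff (m + Finsupp.single i k) p := by
  classical
  induction k generalizing p with
  | zero => simp
  | succ k ih =>
    rw [Function.iterate_succ_apply, ih, coeff_pderiv, add_assoc, ← Finsupp.single_add,
      Finsupp.add_apply, Finsupp.single_eq_same, ← add_assoc (m i), Nat.succ_descFactorial_succ]
    push_cast
    ring

theorem coeff_erase_iterate_pderiv (i : σ) (ν : σ →₀ ℕ) (p : MvPolynomial σ R) :
    coeff (ν.erase i) ((pderiv i)^[ν i] p) = (ν i).factorial * coeff ν p := by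
  rw [coeff_iterate_pderiv, Finsupp.erase_same, zero_add, Nat.descFactorial_self,
    Finsupp.erase_add_single]

theorem C_mul_X_pow_mul_prod_X_pow [DecidableEq σ] (c : R) (a : σ) (n : ℕ) (F : Finset σ)
    (e : σ → ℕ) :
    C c * X a ^ n * ∏ j ∈ F, X j ^ e j =
      monomial (Finsupp.single a n + ∑ j ∈ F, Finsupp.single j (e j)) c := by
  simp only [X_pow_eq_monomial, ← monomial_sum_one, C_mul_monomial, monomial_mul, mul_one]

end CommSemiring

section CommRing

variable [CommRing R]

theorem eval_killCompl {f : ι → σ} (hf : Function.Injective f) (y : ι → R)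
    (p : MvPolynomial σ R) :
    eval y (killCompl hf p) = eval (Function.extend f y 0) p := by
  induction p using MvPolynomial.induction_on with
  | C a => simp
  | add p q hp hq => simp only [map_add, hp, hq]
  | mul_X p i hp =>
    rw [map_mul, map_mul, hp, map_mul, eval_X]
    congr 1
    simp only [killCompl, aeval_X]
    split_ifs with h
    · obtain ⟨a, rfl⟩ := h
      simp [hf.extend_apply]
    · simp [Function.extend_apply' _ _ _ h]

theorem coeff_eq_zero_of_eval_eq_zero_on_face [IsDomain R] (T : Set σ) (S : σ → Set R)
    (hS : ∀ i ∉ T, (S i).Infinite) (p : MvPolynomial σ R)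
    (hp : ∀ x : σ → R, (∀ i ∈ T, x i = 0) → (∀ i ∉ T, x i ∈ S i) → eval x p = 0)
    (μ : σ →₀ ℕ) (hμ : ∀ i ∈ T, μ i = 0) : coeff μ p = 0 := by
  have hkill : killCompl (Subtype.val_injective (p := (· ∈ Tᶜ))) p = 0 := by
    refine funext_set (fun i => S i) (fun i => hS i i.2) fun y hy => ?_
    rw [eval_killCompl, map_zero]
    refine hp _ (fun i hi => Function.extend_apply' _ _ _ fun ⟨j, hj⟩ => j.2 (hj ▸ hi))
      fun i hi => ?_
    rw [show i = ((⟨i, hi⟩ : ↥Tᶜ) : σ) from rfl, Subtype.val_injective.extend_apply]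
    exact hy _ trivial
  have hsupp : ↑μ.support ⊆ Set.range (Subtype.val : ↥Tᶜ → σ) := fun i hi =>
    ⟨⟨i, fun hT => Finsupp.mem_support_iff.mp hi (hμ i hT)⟩, rfl⟩
  rw [← Finsupp.mapDomain_comapDomain _ Subtype.val_injective μ hsupp,
    ← coeff_killCompl Subtype.val_injective, hkill, coeff_zero]

end CommRing
end MvPolynomial

theorem Finset.sum_lt_one_of_le_inv_card_add_one {ι : Type*} [Fintype ι] (x : ι → ℝ)
    (hx : ∀ j, x j ≤ ((Fintype.card ι : ℝ) + 1)⁻¹) : ∑ j, x j < 1 :=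
  calc ∑ j, x j ≤ ∑ _j : ι, ((Fintype.card ι : ℝ) + 1)⁻¹ := Finset.sum_le_sum fun j _ => hx j
    _ = (Fintype.card ι : ℝ) / (Fintype.card ι + 1) := by
      rw [Finset.sum_const, Finset.card_univ, nsmul_eq_mul, div_eq_mul_inv]
    _ < 1 := by rw [div_lt_one (by positivity)]; linarith

section Faces

variable {d s : ℕ}

theorem coeff_eq_zero_of_eval_eq_zero_on_F₁ (p : MvPolynomial (Fin d) ℝ)
    (hp : ∀ x : Fin d → ℝ,
      (∀ j : Fin d, (j : ℕ) + 1 ≤ s → (j : ℕ) + 1 ≠ s - 1 → x j = 0) →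
      (∀ j : Fin d, ((j : ℕ) + 1 = s - 1 ∨ s < (j : ℕ) + 1) → 0 < x j) →
      ∑ j, x j < 1 → eval x p = 0)
    (μ : Fin d →₀ ℕ) (hμ : ∀ j : Fin d, (j : ℕ) + 1 ≤ s → (j : ℕ) + 1 ≠ s - 1 → μ j = 0) :
    coeff μ p = 0 := by
  refine coeff_eq_zero_of_eval_eq_zero_on_face
    {j : Fin d | (j : ℕ) + 1 ≤ s ∧ (j : ℕ) + 1 ≠ s - 1}
    (fun _ => Set.Ioo 0 ((Fintype.card (Fin d) : ℝ) + 1)⁻¹)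
    (fun _ _ => Set.Ioo_infinite (by positivity)) p (fun x hT hS => ?_) μ
    fun j hj => hμ j hj.1 hj.2
  refine hp x (fun j h h' => hT j ⟨h, h'⟩)
    (fun j hj => (hS j (by simp only [Set.mem_ofPred_eq]; omega)).1) ?_
  refine Finset.sum_lt_one_of_le_inv_card_add_one x fun j => ?_
  by_cases hj : (j : ℕ) + 1 ≤ s ∧ (j : ℕ) + 1 ≠ s - 1
  · rw [hT j hj]
    positivity
  · exact (hS j hj).2.le

theorem coeff_eq_of_eval_eq_on_F₂ (p q : MvPolynomial (Fin d) ℝ)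
    (hpq : ∀ x : Fin d → ℝ,
      (∀ j : Fin d, (j : ℕ) + 1 < s → x j = 0) →
      (∀ j : Fin d, (j : ℕ) + 1 = s → x j < 0) →
      (∀ j : Fin d, s < (j : ℕ) + 1 → 0 < x j) → eval x p = eval x q)
    (μ : Fin d →₀ ℕ) (hμ : ∀ j : Fin d, (j : ℕ) + 1 < s → μ j = 0) :
    coeff μ p = coeff μ q := by
  rw [← sub_eq_zero, ← coeff_sub]
  refine coeff_eq_zero_of_eval_eq_zero_on_face {j : Fin d | (j : ℕ) + 1 < s}
    (fun j => if (j : ℕ) + 1 = s then Set.Iio (0 : ℝ) else Set.Ioi 0)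
    (fun j _ => by split_ifs; exacts [Set.Iio_infinite 0, Set.Ioi_infinite 0]) _
    (fun x hT hS => ?_) μ hμ
  rw [map_sub, sub_eq_zero]
  refine hpq x hT (fun j hj => ?_) fun j hj => ?_
  · simpa [hj] using hS j (by simp only [Set.mem_ofPred_eq]; omega)
  · simpa [hj.ne'] using hS j (by simp only [Set.mem_ofPred_eq]; omega)

end Faces

noncomputable section KeyMonomial

variable (d s : ℕ) (r : ℕ → ℕ)

/-- The exponent of `x_{s-1}^{r_{s-1}} x_s^{r̄} ∏_{i > s} x_i^{r_i - r_{i-1}}`; the variable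
`x_i` of the paper is `X (i - 1)` here. -/
def keyExponent : Fin d →₀ ℕ :=
  Finsupp.equivFunOnFinite.symm fun j =>
    if (j : ℕ) = s - 2 then r (s - 1)
    else if (j : ℕ) = s - 1 then r s - r (s - 1) + 1
    else if s ≤ (j : ℕ) then r (j + 1) - r j
    else 0

theorem keyExponent_apply (j : Fin d) :
    keyExponent d s r j =
      if (j : ℕ) = s - 2 then r (s - 1)
      else if (j : ℕ) = s - 1 then r s - r (s - 1) + 1
      else if s ≤ (j : ℕ) then r (j + 1) - r j
      else 0 :=
  rfl

def prescribedPoly (a : Fin d) : MvPolynomial (Fin d) ℝ :=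
  C ((r (s - 1)).factorial : ℝ) * X a ^ (r s - r (s - 1) + 1) *
    (∏ j ∈ Finset.univ.filter (fun j : Fin d => s ≤ (j : ℕ)), X j ^ (r (j + 1) - r j)) *
    (1 - ∑ j ∈ Finset.univ.filter (fun j : Fin d => s ≤ (j : ℕ)), X j) ^ (r d - r s)

theorem eval_prescribedPoly (a : Fin d) (x : Fin d → ℝ) :
    eval x (prescribedPoly d s r a) =
      ((r (s - 1)).factorial : ℝ) * x a ^ (r s - r (s - 1) + 1) *
        (∏ j ∈ Finset.univ.filter (fun j : Fin d => s ≤ (j : ℕ)), x j ^ (r (j + 1) - r j)) *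
        (1 - ∑ j ∈ Finset.univ.filter (fun j : Fin d => s ≤ (j : ℕ)), x j) ^ (r d - r s) := by
  simp [prescribedPoly]

variable {d s}

theorem coeff_erase_keyExponent_prescribedPoly (hs : 2 ≤ s) (a b : Fin d)
    (ha : (a : ℕ) = s - 1) (hb : (b : ℕ) = s - 2) :
    coeff ((keyExponent d s r).erase b) (prescribedPoly d s r a) = (r (s - 1)).factorial := by
  classical
  have hexp : (keyExponent d s r).erase b =
      Finsupp.single a (r s - r (s - 1) + 1) +
        ∑ j ∈ Finset.univ.filter (fun j : Fin d => s ≤ (j : ℕ)),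
          Finsupp.single j (r (j + 1) - r j) := by
    ext j
    simp only [Finsupp.add_apply, Finsupp.finsetSum_apply, Finsupp.single_apply,
      Finset.sum_ite_eq', Finset.mem_filter, Finset.mem_univ, true_and]
    simp only [Finsupp.erase_apply, keyExponent_apply, Fin.ext_iff, ha, hb]
    split_ifs <;> omega
  rw [prescribedPoly, C_mul_X_pow_mul_prod_X_pow, ← hexp, coeff_monomial_mul',
    if_pos le_rfl, tsub_self, ← constantCoeff_eq]
  simp

end KeyMonomial

/-- with `r_s ≤ 2 r_{s-1} - 1` and `r̄ = r_s - r_{s-1} + 1`, there is no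
polynomial `u` whose derivative `∂^r̄/∂x_s^r̄` vanishes on the face `F₁` while
`∂^{r_{s-1}}/∂x_{s-1}^{r_{s-1}}` matches the prescribed polynomial on the face `F₂`. -/
theorem stmt13 (d s : ℕ) (r : ℕ → ℕ) (hs2 : 2 ≤ s) (hsd : s ≤ d) :
    ¬ ∃ u : MvPolynomial (Fin d) ℝ,
      (∀ x : Fin d → ℝ,
        (∀ j : Fin d, (j : ℕ) + 1 ≤ s → (j : ℕ) + 1 ≠ s - 1 → x j = 0) →
        (∀ j : Fin d, ((j : ℕ) + 1 = s - 1 ∨ s < (j : ℕ) + 1) → 0 < x j) →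
        (∑ j, x j < 1) →
        MvPolynomial.eval x
          ((fun p => MvPolynomial.pderiv (⟨s - 1, by omega⟩ : Fin d) p)^[r s - r (s - 1) + 1] u)
          = 0) ∧
      (∀ x : Fin d → ℝ,
        (∀ j : Fin d, (j : ℕ) + 1 < s → x j = 0) →
        (∀ j : Fin d, (j : ℕ) + 1 = s → x j < 0) →
        (∀ j : Fin d, s < (j : ℕ) + 1 → 0 < x j) →
        MvPolynomial.eval x
          ((fun p => MvPolynomial.pderiv (⟨s - 2, by omega⟩ : Fin d) p)^[r (s - 1)] u)
          = ((r (s - 1)).factorial : ℝ) * x ⟨s - 1, by omega⟩ ^ (r s - r (s - 1) + 1) *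
            (∏ j ∈ Finset.univ.filter (fun j : Fin d => s ≤ (j : ℕ)),
              x j ^ (r ((j : ℕ) + 1) - r (j : ℕ))) *
            (1 - ∑ j ∈ Finset.univ.filter (fun j : Fin d => s ≤ (j : ℕ)), x j)
              ^ (r d - r s)) := by
  rintro ⟨u, hF₁, hF₂⟩
  set a : Fin d := ⟨s - 1, by omega⟩
  set b : Fin d := ⟨s - 2, by omega⟩
  set ν := keyExponent d s r
  have hνa : ν a = r s - r (s - 1) + 1 := by
    simp only [ν, a, keyExponent_apply]
    split_ifs <;> omega
  have hνb : ν b = r (s - 1) := by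
    simp only [ν, b, keyExponent_apply, if_true]
  have hzero := coeff_eq_zero_of_eval_eq_zero_on_F₁ _ hF₁ (ν.erase a) fun j h h' => by
    simp only [Finsupp.erase_apply, ν, keyExponent_apply, a, Fin.ext_iff]
    split_ifs <;> omega
  have hone := coeff_eq_of_eval_eq_on_F₂ _ (prescribedPoly d s r a)
    (fun x h h' h'' => (hF₂ x h h' h'').trans (eval_prescribedPoly d s r a x).symm) (ν.erase b)
    fun j h => by
      simp only [Finsupp.erase_apply, ν, keyExponent_apply, b, Fin.ext_iff]
      split_ifs <;> omega
  rw [← hνa, coeff_erase_iterate_pderiv, mul_eq_zero] at hzero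
  rw [← hνb, coeff_erase_iterate_pderiv,
    coeff_erase_keyExponent_prescribedPoly r hs2 a b rfl rfl,
    hzero.resolve_left (by positivity), mul_zero] at hone
  exact (r (s - 1)).factorial_ne_zero (by exact_mod_cast hone.symm)
end
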